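/- arXiv:2407.12221 — 2 statements merged into one kernel-verified Lean document; each statement's English description precedes it below -/
import Mathlib

section
/- Let Ψ be a Hilbert–Schmidt operator from H^L to H (H a separable Hilbert space), let (c_i) be a CONS of H^L and (d_j) a CONS of H, and suppose Ψ = Σ_{i=1}^K Σ_{j=1}^K p_{ij} (c_i ⊗ d_j) for real coefficients p_{ij}. Let C be the positive semi-definite self-adjoint operator on H^L with eigenpairs (λ_i, c_i), and let θ > 0. Then ‖Ψ(C(C+θI)^{−1} P_K − I)‖_HS ≤ θ (λ_K + θ)^{−1} ‖Ψ‖_HS, where P_K projects onto span{c_1,...,c_K} and λ_1 ≥ ... ≥ λ_K > 0. -/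
/-
For `i < K` the basis vector `c i` is an eigenvector of `C R P - 1` with eigenvalue
`-θ / (λ_i + θ)`, whose modulus is at most `θ / (λ_K + θ)` because `λ` is antitone;
for `i ≥ K` both `Ψ (c i)` and `Ψ ((C R P - 1) (c i))` vanish. Hence every column `T (c i)`
of `T = Ψ (C R P - 1)` is bounded by that factor times `‖Ψ (c i)‖`, and so is the
Hilbert–Schmidt norm, which is computed column by column in the basis `c`.
-/

open scoped RealInnerProductSpace

/-- The Hilbert–Schmidt norm of `T`, computed in the Hilbert basis `c` of the
domain: `‖T‖_HS = √(∑ i, ‖T (c i)‖²)`. -/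
noncomputable def hsNorm {E H : Type*} [NormedAddCommGroup E] [InnerProductSpace ℝ E]
    [NormedAddCommGroup H] [InnerProductSpace ℝ H]
    (c : HilbertBasis ℕ ℝ E) (T : E →L[ℝ] H) : ℝ :=
  Real.sqrt (∑' i, ‖T (c i)‖ ^ 2)

theorem hsNorm_le_mul_of_norm_apply_le {E F : Type*} [NormedAddCommGroup E]
    [InnerProductSpace ℝ E] [NormedAddCommGroup F] [InnerProductSpace ℝ F]
    (c : HilbertBasis ℕ ℝ E) {S T : E →L[ℝ] F} {κ : ℝ}
    (hκ : 0 ≤ κ) (hS : Summable fun i => ‖S (c i)‖ ^ 2)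
    (hTS : ∀ i, ‖T (c i)‖ ≤ κ * ‖S (c i)‖) : hsNorm c T ≤ κ * hsNorm c S := by
  have hsq : ∀ i, ‖T (c i)‖ ^ 2 ≤ κ ^ 2 * ‖S (c i)‖ ^ 2 := fun i => by
    rw [← mul_pow]; exact pow_le_pow_left₀ (norm_nonneg _) (hTS i) 2
  have hT : Summable fun i => ‖T (c i)‖ ^ 2 :=
    .of_nonneg_of_le (fun _ => by positivity) hsq (hS.mul_left _)
  calc hsNorm c T ≤ Real.sqrt (κ ^ 2 * ∑' i, ‖S (c i)‖ ^ 2) := by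
        rw [← tsum_mul_left]; exact Real.sqrt_le_sqrt (hT.tsum_le_tsum hsq (hS.mul_left _))
    _ = κ * hsNorm c S := by rw [Real.sqrt_mul (by positivity), Real.sqrt_sq hκ, hsNorm]

theorem Orthonormal.sum_inner_smul_eq_ite {ι E F : Type*} [NormedAddCommGroup E]
    [InnerProductSpace ℝ E] [AddCommGroup F] [Module ℝ F] [DecidableEq ι]
    {v : ι → E} (hv : Orthonormal ℝ v) (s : Finset ι) (w : ι → F) (i : ι) :
    ∑ j ∈ s, ⟪v j, v i⟫ • w j = if i ∈ s then w i else 0 := by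
  simp [orthonormal_iff_ite.mp hv, ite_smul]

theorem resolvent_apply_of_eigenvector {E 𝓕 : Type*} [AddCommGroup E] [Module ℝ E]
    [FunLike 𝓕 E E] [LinearMapClass 𝓕 ℝ E E] {C : 𝓕} {R : E → E} {θ μ : ℝ}
    (hR : ∀ x, R (C x + θ • x) = x) {v : E} (hv : C v = μ • v) (hμθ : μ + θ ≠ 0) :
    R v = (μ + θ)⁻¹ • v := by
  have hsolve : C ((μ + θ)⁻¹ • v) + θ • (μ + θ)⁻¹ • v = v := by
    rw [map_smul, hv]
    match_scalars
    field_simp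
  rw [← hR ((μ + θ)⁻¹ • v), hsolve]

theorem tikhonov_residual_of_eigenvector {E 𝓕 : Type*} [AddCommGroup E] [Module ℝ E]
    [FunLike 𝓕 E E] [LinearMapClass 𝓕 ℝ E E] {C : 𝓕} {R : E → E} {θ μ : ℝ}
    (hR : ∀ x, R (C x + θ • x) = x) {v : E} (hv : C v = μ • v) (hμθ : μ + θ ≠ 0) :
    C (R v) - v = -(θ / (μ + θ)) • v := by
  rw [resolvent_apply_of_eigenvector hR hv hμθ, map_smul, hv]
  match_scalars
  field_simp
  ring

theorem tikhonov_truncation_hs_bound_general {H : Type*} [NormedAddCommGroup H]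
    [InnerProductSpace ℝ H] (L K : ℕ)
    (c : HilbertBasis ℕ ℝ (PiLp 2 (fun _ : Fin L => H))) (d : HilbertBasis ℕ ℝ H)
    (p : ℕ → ℕ → ℝ)
    (Ψ : PiLp 2 (fun _ : Fin L => H) →L[ℝ] H)
    (hΨ : ∀ x, Ψ x = ∑ i ∈ Finset.range K, ∑ j ∈ Finset.range K,
      p i j • (⟪(c i : PiLp 2 (fun _ : Fin L => H)), x⟫ • (d j : H)))
    (C R P : PiLp 2 (fun _ : Fin L => H) →L[ℝ] PiLp 2 (fun _ : Fin L => H))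
    (lam : ℕ → ℝ) (hanti : Antitone lam) (hpos : ∀ i, 0 ≤ lam i)
    (hC : ∀ i, C (c i) = lam i • c i)
    (θ : ℝ) (hθ : 0 < θ)
    (hR1 : ∀ x, R (C x + θ • x) = x)
    (hP : ∀ x, P x = ∑ j ∈ Finset.range K,
      ⟪(c j : PiLp 2 (fun _ : Fin L => H)), x⟫ • (c j : PiLp 2 (fun _ : Fin L => H))) :
    hsNorm c (Ψ ∘L (C ∘L R ∘L P - 1)) ≤ θ * (lam (K - 1) + θ)⁻¹ * hsNorm c Ψ := by
  have hΨc : ∀ i, K ≤ i → Ψ (c i) = 0 := fun i hi => by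
    simp_rw [hΨ, smul_comm (p _ _), ← Finset.smul_sum]
    simp [c.orthonormal.sum_inner_smul_eq_ite, hi]
  have hPc : ∀ i, P (c i) = if i < K then c i else 0 := fun i => by
    simp [hP, c.orthonormal.sum_inner_smul_eq_ite]
  have hS : Summable fun i => ‖Ψ (c i)‖ ^ 2 :=
    summable_of_ne_finset_zero (s := Finset.range K) fun i hi => by
      simp [hΨc i (by simpa using hi)]
  have hθK : 0 < lam (K - 1) + θ := by linarith [hpos (K - 1)]
  refine hsNorm_le_mul_of_norm_apply_le c (by positivity) hS fun i => ?_
  by_cases hi : i < K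
  · have hθi : 0 < lam i + θ := by linarith [hpos i]
    calc ‖Ψ (C (R (P (c i))) - c i)‖ = θ / (lam i + θ) * ‖Ψ (c i)‖ := by
          rw [hPc, if_pos hi, tikhonov_residual_of_eigenvector hR1 (hC i) hθi.ne',
            map_smul, norm_smul, norm_neg, Real.norm_of_nonneg (by positivity)]
      _ ≤ θ * (lam (K - 1) + θ)⁻¹ * ‖Ψ (c i)‖ := by
          rw [← div_eq_mul_inv]
          gcongr ?_ * _
          exact div_le_div_of_nonneg_left hθ.le hθK
            (by linarith [hanti (show i ≤ K - 1 by omega)])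
  · simp [hPc, hi, hΨc i (not_lt.mp hi)]

/-- Let `Ψ : H^L → H` be Hilbert–Schmidt with finite expansion
`Ψ = ∑_{i,j ≤ K} p_{ij} (c_i ⊗ d_j)` in the tensor CONS built from a Hilbert basis `c` of
`H^L` and `d` of `H`, and let `C` be positive self-adjoint with eigenpairs `(λ_i, c_i)`,
`λ_1 ≥ … ≥ λ_K > 0`, `θ > 0`.  Then
`‖Ψ (C (C + θI)⁻¹ P_K − I)‖_HS ≤ θ (λ_K + θ)⁻¹ ‖Ψ‖_HS`, where `P_K` projects onto
`span{c_1, …, c_K}` and `R` denotes the inverse of `C + θI` (indices 0-based). -/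
theorem tikhonov_truncation_hs_bound {H : Type*} [NormedAddCommGroup H]
    [InnerProductSpace ℝ H] [CompleteSpace H] (L K : ℕ) (hK : 0 < K)
    (c : HilbertBasis ℕ ℝ (PiLp 2 (fun _ : Fin L => H))) (d : HilbertBasis ℕ ℝ H)
    (p : ℕ → ℕ → ℝ)
    (Ψ : PiLp 2 (fun _ : Fin L => H) →L[ℝ] H)
    (hΨ : ∀ x, Ψ x = ∑ i ∈ Finset.range K, ∑ j ∈ Finset.range K,
      p i j • (⟪(c i : PiLp 2 (fun _ : Fin L => H)), x⟫ • (d j : H)))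
    (C R P : PiLp 2 (fun _ : Fin L => H) →L[ℝ] PiLp 2 (fun _ : Fin L => H))
    (hCsa : ∀ u v, ⟪C u, v⟫ = ⟪u, C v⟫)
    (lam : ℕ → ℝ) (hanti : Antitone lam) (hpos : ∀ i, 0 ≤ lam i)
    (hlamK : 0 < lam (K - 1))
    (hC : ∀ i, C (c i) = lam i • c i)
    (θ : ℝ) (hθ : 0 < θ)
    (hR1 : ∀ x, R (C x + θ • x) = x)
    (hR2 : ∀ x, C (R x) + θ • R x = x)
    (hP : ∀ x, P x = ∑ j ∈ Finset.range K,
      ⟪(c j : PiLp 2 (fun _ : Fin L => H)), x⟫ • (c j : PiLp 2 (fun _ : Fin L => H))) :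
    hsNorm c (Ψ ∘L (C ∘L R ∘L P - 1)) ≤ θ * (lam (K - 1) + θ)⁻¹ * hsNorm c Ψ :=
  tikhonov_truncation_hs_bound_general L K c d p Ψ hΨ C R P lam hanti hpos hC θ hθ hR1 hP
end

section
/- Let (ε_k)_{k∈ℤ} be an H-valued white noise (centered, weakly stationary, pairwise uncorrelated) with covariance operator C_ε having eigenpairs (λ_k, c_k), λ_k > 0 (C_ε injective). Let (A_ℓ)_{ℓ≥0} and (B_ℓ)_{ℓ≥0} be bounded operators with Σ‖A_ℓ‖ < ∞ and Σ‖B_ℓ‖ < ∞. If Σ_{ℓ≥0} A_ℓ(ε_{i−ℓ}) = Σ_{ℓ≥0} B_ℓ(ε_{i−ℓ}) almost surely for some i, then A_ℓ = B_ℓ for all ℓ. -/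
open scoped RealInnerProductSpace InnerProduct
open MeasureTheory

/-!
Pair the series with `⟪ε_{i-j}, u⟫`: by Cauchy–Schwarz and `∑ ‖A_ℓ‖ < ∞` the expectation may be
taken termwise, and since the noise is uncorrelated only the term `ℓ = j` survives, so
`E[⟪ε_{i-j}, u⟫ ⟪Z, v⟫] = ⟪A_j (C_ε u), v⟫`. The left side depends only on `Z`, hence
`A_j ∘ C_ε = B_j ∘ C_ε`, and since `C_ε c_k = λ_k c_k` with `λ_k ≠ 0`, `A_j` and `B_j` agree on
the Hilbert basis `(c_k)`.
-/

theorem ContinuousLinearMap.ext_hilbertBasis {ι 𝕜 E F : Type*} [RCLike 𝕜]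
    [NormedAddCommGroup E] [InnerProductSpace 𝕜 E] [TopologicalSpace F] [T2Space F]
    [AddCommMonoid F] [Module 𝕜 F] (b : HilbertBasis ι 𝕜 E) {f g : E →L[𝕜] F}
    (h : ∀ i, f (b i) = g (b i)) : f = g :=
  ContinuousLinearMap.ext_on (Submodule.dense_iff_topologicalClosure_eq_top.mpr b.dense_span)
    (by rintro _ ⟨i, rfl⟩; exact h i)

theorem MeasureTheory.integral_abs_mul_le_sqrt_mul_sqrt {Ω : Type*} [MeasurableSpace Ω]
    {μ : Measure Ω} {f g : Ω → ℝ} (hf : MemLp f 2 μ) (hg : MemLp g 2 μ) :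
    ∫ ω, |f ω * g ω| ∂μ ≤ √(∫ ω, f ω ^ 2 ∂μ) * √(∫ ω, g ω ^ 2 ∂μ) := by
  have hofReal : ENNReal.ofReal 2 = 2 := by norm_num
  have h := integral_mul_norm_le_Lp_mul_Lq Real.HolderConjugate.two_two
    (hofReal ▸ hf) (hofReal ▸ hg)
  simpa only [Real.norm_eq_abs, ← abs_mul, Real.rpow_two, sq_abs, ← Real.sqrt_eq_rpow] using h

namespace WhiteNoise

variable {Ω : Type*} [MeasurableSpace Ω] {μ : Measure Ω}
  {H : Type*} [NormedAddCommGroup H] [InnerProductSpace ℝ H]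
  {ε : ℤ → Ω → H} {Cε : H →L[ℝ] H}

theorem integrable_inner_mul_inner (hL2 : ∀ k, MemLp (ε k) 2 μ) (k l : ℤ) (u w : H) :
    Integrable (fun ω => ⟪ε k ω, u⟫ * ⟪ε l ω, w⟫) μ :=
  ((hL2 k).inner_const u).integrable_mul ((hL2 l).inner_const w)

theorem integral_inner_mul_inner
    (hcov : ∀ (k : ℤ) (u v : H), ∫ ω, ⟪ε k ω, u⟫ * ⟪ε k ω, v⟫ ∂μ = ⟪Cε u, v⟫)
    (huncorr : ∀ (k l : ℤ), k ≠ l → ∀ u v : H, ∫ ω, ⟪ε k ω, u⟫ * ⟪ε l ω, v⟫ ∂μ = 0)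
    (k l : ℤ) (u w : H) :
    ∫ ω, ⟪ε k ω, u⟫ * ⟪ε l ω, w⟫ ∂μ = if l = k then ⟪Cε u, w⟫ else 0 := by
  split_ifs with hlk
  · exact hlk ▸ hcov k u w
  · exact huncorr k l (Ne.symm hlk) u w

theorem integral_inner_sq_le
    (hcov : ∀ (k : ℤ) (u v : H), ∫ ω, ⟪ε k ω, u⟫ * ⟪ε k ω, v⟫ ∂μ = ⟪Cε u, v⟫)
    (k : ℤ) (u : H) :
    ∫ ω, ⟪ε k ω, u⟫ ^ 2 ∂μ ≤ ‖Cε‖ * ‖u‖ ^ 2 := by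
  simp only [sq, hcov k u u]
  calc ⟪Cε u, u⟫ ≤ ‖Cε u‖ * ‖u‖ := real_inner_le_norm _ _
    _ ≤ ‖Cε‖ * ‖u‖ * ‖u‖ := by gcongr; exact Cε.le_opNorm u
    _ = ‖Cε‖ * (‖u‖ * ‖u‖) := mul_assoc _ _ _

theorem integral_abs_inner_mul_inner_le (hL2 : ∀ k, MemLp (ε k) 2 μ)
    (hcov : ∀ (k : ℤ) (u v : H), ∫ ω, ⟪ε k ω, u⟫ * ⟪ε k ω, v⟫ ∂μ = ⟪Cε u, v⟫)
    (k l : ℤ) (u w : H) :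
    ∫ ω, |⟪ε k ω, u⟫ * ⟪ε l ω, w⟫| ∂μ ≤ ‖Cε‖ * (‖u‖ * ‖w‖) := by
  refine (integral_abs_mul_le_sqrt_mul_sqrt ((hL2 k).inner_const u)
    ((hL2 l).inner_const w)).trans ?_
  rw [← Real.sqrt_mul (integral_nonneg fun ω => sq_nonneg _),
    ← Real.sqrt_sq (by positivity : 0 ≤ ‖Cε‖ * (‖u‖ * ‖w‖))]
  refine Real.sqrt_le_sqrt ?_
  calc (∫ ω, ⟪ε k ω, u⟫ ^ 2 ∂μ) * ∫ ω, ⟪ε l ω, w⟫ ^ 2 ∂μ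
      ≤ (‖Cε‖ * ‖u‖ ^ 2) * (‖Cε‖ * ‖w‖ ^ 2) :=
        mul_le_mul (integral_inner_sq_le hcov k u) (integral_inner_sq_le hcov l w)
          (integral_nonneg fun ω => sq_nonneg _) (by positivity)
    _ = (‖Cε‖ * (‖u‖ * ‖w‖)) ^ 2 := by ring

theorem integral_inner_mul_inner_of_hasSum [CompleteSpace H] (hL2 : ∀ k, MemLp (ε k) 2 μ)
    (hcov : ∀ (k : ℤ) (u v : H), ∫ ω, ⟪ε k ω, u⟫ * ⟪ε k ω, v⟫ ∂μ = ⟪Cε u, v⟫)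
    (huncorr : ∀ (k l : ℤ), k ≠ l → ∀ u v : H, ∫ ω, ⟪ε k ω, u⟫ * ⟪ε l ω, v⟫ ∂μ = 0)
    {T : ℕ → H →L[ℝ] H} (hT : Summable fun ℓ => ‖T ℓ‖) {i : ℤ} {Z : Ω → H}
    (hZ : ∀ᵐ ω ∂μ, HasSum (fun ℓ : ℕ => T ℓ (ε (i - ℓ) ω)) (Z ω)) (j : ℕ) (u v : H) :
    ∫ ω, ⟪ε (i - j) ω, u⟫ * ⟪Z ω, v⟫ ∂μ = ⟪T j (Cε u), v⟫ := by
  set g : ℕ → Ω → ℝ := fun ℓ ω => ⟪ε (i - j) ω, u⟫ * ⟪ε (i - ℓ) ω, ((T ℓ)†) v⟫ with hg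
  have hg_int (ℓ : ℕ) : Integrable (g ℓ) μ := integrable_inner_mul_inner hL2 _ _ _ _
  have hg_norm (ℓ : ℕ) : ∫ ω, ‖g ℓ ω‖ ∂μ ≤ ‖Cε‖ * ‖u‖ * ‖v‖ * ‖T ℓ‖ := by
    calc ∫ ω, ‖g ℓ ω‖ ∂μ ≤ ‖Cε‖ * (‖u‖ * ‖((T ℓ)†) v‖) :=
          integral_abs_inner_mul_inner_le hL2 hcov _ _ _ _
      _ ≤ ‖Cε‖ * (‖u‖ * (‖T ℓ‖ * ‖v‖)) := by
          gcongr
          simpa only [LinearIsometryEquiv.norm_map] using ((T ℓ)†).le_opNorm v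
      _ = ‖Cε‖ * ‖u‖ * ‖v‖ * ‖T ℓ‖ := by ring
  have hg_summable : Summable fun ℓ => ∫ ω, ‖g ℓ ω‖ ∂μ :=
    Summable.of_nonneg_of_le (fun ℓ => integral_nonneg fun ω => norm_nonneg _) hg_norm
      (hT.mul_left _)
  have hg_integral (ℓ : ℕ) : ∫ ω, g ℓ ω ∂μ = if ℓ = j then ⟪T j (Cε u), v⟫ else 0 := by
    rw [hg, integral_inner_mul_inner hcov huncorr]
    by_cases hℓj : ℓ = j
    · subst hℓj
      simp [ContinuousLinearMap.adjoint_inner_right]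
    · simp [hℓj]
  have hg_tsum : ∀ᵐ ω ∂μ, ∑' ℓ, g ℓ ω = ⟪ε (i - j) ω, u⟫ * ⟪Z ω, v⟫ := by
    filter_upwards [hZ] with ω hω
    refine (HasSum.mul_left _ ?_).tsum_eq
    simpa only [ContinuousLinearMap.adjoint_inner_right, innerSL_apply_apply,
      real_inner_comm v] using hω.mapL (innerSL ℝ v)
  have hsum := hasSum_integral_of_summable_integral_norm hg_int hg_summable
  rw [integral_congr_ae hg_tsum, funext hg_integral] at hsum
  exact hsum.unique (hasSum_ite_eq j _)

end WhiteNoise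

theorem white_noise_series_identification_general
    {Ω : Type*} [MeasurableSpace Ω] (μ : Measure Ω)
    {H : Type*} [NormedAddCommGroup H] [InnerProductSpace ℝ H] [CompleteSpace H]
    (ε : ℤ → Ω → H)
    (hL2 : ∀ k, MemLp (ε k) 2 μ)
    (Cε : H →L[ℝ] H)
    (hcov : ∀ (k : ℤ) (u v : H), ∫ ω, ⟪ε k ω, u⟫ * ⟪ε k ω, v⟫ ∂μ = ⟪Cε u, v⟫)
    (huncorr : ∀ (k l : ℤ), k ≠ l → ∀ u v : H, ∫ ω, ⟪ε k ω, u⟫ * ⟪ε l ω, v⟫ ∂μ = 0)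
    (c : HilbertBasis ℕ ℝ H) (lam : ℕ → ℝ) (hlam : ∀ k, 0 < lam k)
    (hCε : ∀ k, Cε (c k) = lam k • c k)
    (A B : ℕ → H →L[ℝ] H)
    (hA : Summable fun ℓ => ‖A ℓ‖) (hB : Summable fun ℓ => ‖B ℓ‖)
    (i : ℤ) (Z : Ω → H)
    (hsum : ∀ᵐ ω ∂μ,
      HasSum (fun ℓ : ℕ => A ℓ (ε (i - (ℓ : ℤ)) ω)) (Z ω) ∧
      HasSum (fun ℓ : ℕ => B ℓ (ε (i - (ℓ : ℤ)) ω)) (Z ω)) :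
    ∀ ℓ, A ℓ = B ℓ := by
  intro j
  refine ContinuousLinearMap.ext_hilbertBasis c fun k => ?_
  have hAB : A j (Cε (c k)) = B j (Cε (c k)) := ext_inner_right ℝ fun v => by
    rw [← WhiteNoise.integral_inner_mul_inner_of_hasSum hL2 hcov huncorr hA
        (hsum.mono fun _ h => h.1),
      WhiteNoise.integral_inner_mul_inner_of_hasSum hL2 hcov huncorr hB
        (hsum.mono fun _ h => h.2)]
  rw [hCε, map_smul, map_smul] at hAB
  exact smul_right_injective H (hlam k).ne' hAB

/-- Let `(ε_k)_{k∈ℤ}` be an `H`-valued white noise (centered, weakly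
stationary, pairwise uncorrelated) whose covariance operator `C_ε` has eigenpairs
`(λ_k, c_k)` with `λ_k > 0` (so `C_ε` is injective).  If `(A_ℓ)` and `(B_ℓ)` are bounded
operators with summable norms and `∑_ℓ A_ℓ(ε_{i−ℓ}) = ∑_ℓ B_ℓ(ε_{i−ℓ})` almost surely
(both series converging to a common limit `Z`), then `A_ℓ = B_ℓ` for all `ℓ`. -/
theorem white_noise_series_identification
    {Ω : Type*} [MeasurableSpace Ω] (μ : Measure Ω) [IsProbabilityMeasure μ]
    {H : Type*} [NormedAddCommGroup H] [InnerProductSpace ℝ H] [CompleteSpace H]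
    (ε : ℤ → Ω → H)
    (hL2 : ∀ k, MemLp (ε k) 2 μ)
    (hcentered : ∀ k, ∫ ω, ε k ω ∂μ = 0)
    (Cε : H →L[ℝ] H)
    (hcov : ∀ (k : ℤ) (u v : H), ∫ ω, ⟪ε k ω, u⟫ * ⟪ε k ω, v⟫ ∂μ = ⟪Cε u, v⟫)
    (huncorr : ∀ (k l : ℤ), k ≠ l → ∀ u v : H, ∫ ω, ⟪ε k ω, u⟫ * ⟪ε l ω, v⟫ ∂μ = 0)
    (c : HilbertBasis ℕ ℝ H) (lam : ℕ → ℝ) (hlam : ∀ k, 0 < lam k)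
    (hCε : ∀ k, Cε (c k) = lam k • c k)
    (A B : ℕ → H →L[ℝ] H)
    (hA : Summable fun ℓ => ‖A ℓ‖) (hB : Summable fun ℓ => ‖B ℓ‖)
    (i : ℤ) (Z : Ω → H)
    (hsum : ∀ᵐ ω ∂μ,
      HasSum (fun ℓ : ℕ => A ℓ (ε (i - (ℓ : ℤ)) ω)) (Z ω) ∧
      HasSum (fun ℓ : ℕ => B ℓ (ε (i - (ℓ : ℤ)) ω)) (Z ω)) :
    ∀ ℓ, A ℓ = B ℓ :=
  white_noise_series_identification_general μ ε hL2 Cε hcov huncorr c lam hlam hCε A B hA hB i Z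
    hsum
end
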